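/- arXiv:1302.3143 — 4 statements merged into one kernel-verified Lean document; each statement's English description precedes it below -/
import Mathlib

section
/- Let Π_A and Π_B be orthogonal projectors on a finite-dimensional complex inner product space, and let R_A = 2Π_A − I and R_B = 2Π_B − I be the reflections about their images. Let Θ ≥ 0 and let P_Θ be the orthogonal projector onto the span of eigenvectors of R_B R_A with eigenvalues e^{iθ} where |θ| ≤ Θ. Then for any vector w with Π_A w = 0, one has ‖P_Θ Π_B w‖ ≤ (Θ/2)‖w‖. -/
/-!
`U = R_B R_A` is unitary and `Π_A w = 0` gives `Π_B w = (w - U w) / 2`. The subspace `E_Θ` is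
invariant under `U` and `U*`, so `P_Θ` commutes with `U` and `P_Θ Π_B w = (x - U x) / 2` with
`x = P_Θ w`. An `e^{iθ}`-eigenvector of `U` is a `(Θ² - |1 - e^{iθ}|²)`-eigenvector of the
self-adjoint operator `S = Θ² - (1 - U)* (1 - U)`, and `|1 - e^{iθ}| ≤ |θ| ≤ Θ`; so `E_Θ` lies in
the span of the eigenspaces of `S` with nonnegative eigenvalues, on which
`⟪S x, x⟫ = Θ² ‖x‖² - ‖x - U x‖²` is nonnegative.
-/

open scoped InnerProductSpace
open Module End

theorem biSup_eigenspace_mem_invtSubmodule {R M ι : Type*} [CommRing R] [AddCommGroup M]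
    [Module R M] {f g : End R M} (h : Commute f g) (s : Set ι) (μ : ι → R) :
    ⨆ i ∈ s, eigenspace f (μ i) ∈ invtSubmodule g := by
  rw [mem_invtSubmodule_iff_map_le, Submodule.map_iSup]
  refine iSup_mono fun i => ?_
  rw [Submodule.map_iSup]
  refine iSup_mono fun _ => Submodule.map_le_iff_le_comap.mpr ?_
  exact mapsTo_genEigenspace_of_comm h (μ i) 1

section RCLike

variable {𝕜 E : Type*} [RCLike 𝕜] [NormedAddCommGroup E] [InnerProductSpace 𝕜 E]

theorem Submodule.starProjection_apply_of_mem_invtSubmodule {K : Submodule 𝕜 E}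
    [K.HasOrthogonalProjection] {T : E →ₗ[𝕜] E} (hK : K ∈ invtSubmodule T)
    (hK' : Kᗮ ∈ invtSubmodule T) (v : E) :
    K.starProjection (T v) = T (K.starProjection v) := by
  rw [mem_invtSubmodule_iff_forall_mem_of_mem] at hK hK'
  refine K.eq_starProjection_of_mem_of_inner_eq_zero (hK _ (K.starProjection_apply_mem v)) ?_
  rw [← map_sub]
  exact (K.mem_orthogonal' _).mp (hK' _ (K.sub_starProjection_mem_orthogonal v))

variable [FiniteDimensional 𝕜 E]

theorem orthogonal_mem_invtSubmodule_of_star {T : E →ₗ[𝕜] E} {K : Submodule 𝕜 E}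
    (hK : K ∈ invtSubmodule (star T)) : Kᗮ ∈ invtSubmodule T := by
  rw [mem_invtSubmodule_iff_forall_mem_of_mem] at hK ⊢
  intro y hy
  rw [Submodule.mem_orthogonal] at hy ⊢
  intro u hu
  rw [← LinearMap.adjoint_inner_left]
  exact hy _ (hK u hu)

theorem reflection_mem_unitary {P : E →ₗ[𝕜] E} (hidem : P ∘ₗ P = P) (hsym : P.IsSymmetric) :
    (2 : 𝕜) • P - LinearMap.id ∈ unitary (E →ₗ[𝕜] E) := by
  have hP : IsStarProjection P := ⟨hidem, P.isSymmetric_iff_isSelfAdjoint.mp hsym⟩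
  simpa [two_smul, two_mul, Module.End.one_eq_id] using hP.two_mul_sub_one_mem_unitary

theorem star_apply_of_mem_eigenspace {U : E →ₗ[𝕜] E} (hU : star U * U = 1) {μ : 𝕜} {x : E}
    (hx : x ∈ eigenspace U μ) : star U x = μ⁻¹ • x := by
  rw [mem_eigenspace_iff] at hx
  have hx' : x = μ • star U x := by
    rw [← map_smul, ← hx, ← Module.End.mul_apply, hU, Module.End.one_apply]
  obtain rfl | hμ := eq_or_ne μ 0
  · rw [hx', zero_smul, map_zero, smul_zero]
  · exact (eq_inv_smul_iff₀ hμ).mpr hx'.symm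

theorem mem_eigenspace_star_one_sub_mul_one_sub {U : E →ₗ[𝕜] E} (hU : star U * U = 1) {μ : 𝕜}
    (hμ : ‖μ‖ = 1) {x : E} (hx : x ∈ eigenspace U μ) :
    x ∈ eigenspace (star (1 - U) * (1 - U)) ((‖1 - μ‖ ^ 2 : ℝ) : 𝕜) := by
  have hstar := star_apply_of_mem_eigenspace hU hx
  rw [RCLike.inv_eq_conj hμ] at hstar
  rw [mem_eigenspace_iff] at hx ⊢
  simp only [star_sub, star_one, Module.End.mul_apply, LinearMap.sub_apply, Module.End.one_apply,
    hx, map_sub, map_smul, hstar]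
  rw [RCLike.ofReal_pow, ← RCLike.conj_mul, map_sub, map_one]
  module

theorem LinearMap.IsSymmetric.re_inner_apply_self_eq_sum {T : E →ₗ[𝕜] E} (hT : T.IsSymmetric)
    {n : ℕ} (hn : finrank 𝕜 E = n) (x : E) :
    RCLike.re ⟪T x, x⟫_𝕜 = ∑ i, hT.eigenvalues hn i * ‖⟪hT.eigenvectorBasis hn i, x⟫_𝕜‖ ^ 2 := by
  rw [← (hT.eigenvectorBasis hn).sum_inner_mul_inner, map_sum]
  refine Finset.sum_congr rfl fun i _ => ?_
  rw [hT, hT.apply_eigenvectorBasis, inner_smul_right, mul_assoc, ← inner_conj_symm x,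
    RCLike.conj_mul]
  norm_cast

theorem LinearMap.IsSymmetric.re_inner_apply_self_nonneg_of_mem_iSup_eigenspace
    {T : E →ₗ[𝕜] E} (hT : T.IsSymmetric) {x : E}
    (hx : x ∈ ⨆ c ∈ Set.Ici (0 : ℝ), eigenspace T (c : 𝕜)) : 0 ≤ RCLike.re ⟪T x, x⟫_𝕜 := by
  rw [hT.re_inner_apply_self_eq_sum rfl]
  refine Finset.sum_nonneg fun i _ => ?_
  obtain hμ | hμ := le_or_gt 0 (hT.eigenvalues rfl i)
  · positivity
  have hortho :
      eigenspace T (hT.eigenvalues rfl i : 𝕜) ⟂ ⨆ c ∈ Set.Ici (0 : ℝ), eigenspace T (c : 𝕜) :=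
    Submodule.isOrtho_iSup_right.mpr fun c => Submodule.isOrtho_iSup_right.mpr fun hc =>
      hT.orthogonalFamily_eigenspaces.isOrtho <| by
        exact_mod_cast (hμ.trans_le (Set.mem_Ici.mp hc)).ne
  rw [hortho.inner_eq (hT.hasEigenvector_eigenvectorBasis rfl i).1 hx]
  simp

end RCLike

noncomputable def eigenphaseSubspace {M : Type*} [AddCommGroup M] [Module ℂ M] (U : End ℂ M)
    (Θ : ℝ) : Submodule ℂ M :=
  ⨆ θ ∈ Set.Icc (-Θ) Θ, eigenspace U (Complex.exp (θ * Complex.I))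

theorem norm_sub_apply_le_of_mem_eigenphaseSubspace {E : Type*} [NormedAddCommGroup E]
    [InnerProductSpace ℂ E] [FiniteDimensional ℂ E] {U : E →ₗ[ℂ] E}
    (hU : star U * U = 1) {Θ : ℝ} (hΘ : 0 ≤ Θ) {x : E}
    (hx : x ∈ eigenphaseSubspace U Θ) : ‖x - U x‖ ≤ Θ * ‖x‖ := by
  set S : E →ₗ[ℂ] E := Θ ^ 2 • 1 - star (1 - U) * (1 - U)
  have hS : S.IsSymmetric := (S.isSymmetric_iff_isSelfAdjoint).mpr <|
    ((IsSelfAdjoint.all _).smul (IsSelfAdjoint.one _)).sub (IsSelfAdjoint.star_mul_self _)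
  have hSx : RCLike.re ⟪S x, x⟫_ℂ = Θ ^ 2 * ‖x‖ ^ 2 - ‖x - U x‖ ^ 2 := by
    rw [LinearMap.sub_apply, inner_sub_left, Module.End.mul_apply, LinearMap.star_eq_adjoint,
      LinearMap.adjoint_inner_left, LinearMap.smul_apply, inner_smul_left_eq_smul, map_sub,
      RCLike.smul_re, Module.End.one_apply, inner_self_eq_norm_sq, inner_self_eq_norm_sq]
    rfl
  have hle : eigenphaseSubspace U Θ ≤ ⨆ c ∈ Set.Ici (0 : ℝ), eigenspace S (c : ℂ) := by
    refine iSup₂_le fun θ hθ => ?_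
    have hgap : ‖1 - Complex.exp (θ * Complex.I)‖ ≤ Θ := by
      rw [norm_sub_rev, mul_comm]
      exact Real.norm_exp_I_mul_ofReal_sub_one_le.trans (abs_le.mpr hθ)
    refine le_iSup₂_of_le (Θ ^ 2 - ‖1 - Complex.exp (θ * Complex.I)‖ ^ 2)
      (sub_nonneg.mpr (pow_le_pow_left₀ (norm_nonneg _) hgap 2)) fun y hy => ?_
    have hy' := mem_eigenspace_star_one_sub_mul_one_sub hU (Complex.norm_exp_ofReal_mul_I θ) hy
    rw [mem_eigenspace_iff] at hy' ⊢
    rw [LinearMap.sub_apply, hy', LinearMap.smul_apply, Module.End.one_apply, Complex.ofReal_sub,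
      sub_smul, Complex.coe_smul]
    rfl
  have hpos := hS.re_inner_apply_self_nonneg_of_mem_iSup_eigenspace (hle hx)
  rw [hSx] at hpos
  exact (pow_le_pow_iff_left₀ (norm_nonneg _) (by positivity) two_ne_zero).mp (by linarith)

/-- **Effective Spectral Gap Lemma.**  Let `PA` and `PB` be orthogonal projectors
(self-adjoint idempotents) on a finite-dimensional complex inner product space,
`R_A = 2PA − I`, `R_B = 2PB − I` the reflections about their images, `Θ ≥ 0`, and
`PΘ` the orthogonal projection onto the span `EΘ` of the eigenvectors of `R_B R_A`
with eigenvalues `e^{iθ}`, `|θ| ≤ Θ`.  Then `PA w = 0` implies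
`‖PΘ (PB w)‖ ≤ (Θ/2)‖w‖`. -/
theorem effective_spectral_gap_lemma
    (n : ℕ)
    (PA PB : EuclideanSpace ℂ (Fin n) →ₗ[ℂ] EuclideanSpace ℂ (Fin n))
    (hAidem : PA ∘ₗ PA = PA) (hAsym : LinearMap.IsSymmetric PA)
    (hBidem : PB ∘ₗ PB = PB) (hBsym : LinearMap.IsSymmetric PB)
    (RA RB : EuclideanSpace ℂ (Fin n) →ₗ[ℂ] EuclideanSpace ℂ (Fin n))
    (hRA : RA = (2 : ℂ) • PA - LinearMap.id)
    (hRB : RB = (2 : ℂ) • PB - LinearMap.id)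
    (Θ : ℝ) (hΘ : 0 ≤ Θ)
    (EΘ : Submodule ℂ (EuclideanSpace ℂ (Fin n)))
    (hEΘ : EΘ = ⨆ θ ∈ Set.Icc (-Θ) Θ,
      Module.End.eigenspace (RB ∘ₗ RA) (Complex.exp (θ * Complex.I)))
    (w : EuclideanSpace ℂ (Fin n)) (hw : PA w = 0) :
    ‖(EΘ.orthogonalProjection (PB w) : EuclideanSpace ℂ (Fin n))‖ ≤ (Θ / 2) * ‖w‖ := by
  obtain rfl : EΘ = eigenphaseSubspace (RB ∘ₗ RA) Θ := hEΘ
  have hU : RB ∘ₗ RA ∈ unitary (EuclideanSpace ℂ (Fin n) →ₗ[ℂ] EuclideanSpace ℂ (Fin n)) := by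
    subst hRA hRB
    exact mul_mem (reflection_mem_unitary hBidem hBsym) (reflection_mem_unitary hAidem hAsym)
  have hPBw : PB w = (2⁻¹ : ℂ) • (w - (RB ∘ₗ RA) w) := by
    subst hRA hRB
    simp only [LinearMap.comp_apply, LinearMap.sub_apply, LinearMap.smul_apply, LinearMap.id_apply,
      hw, smul_zero, zero_sub, map_neg]
    module
  set U := RB ∘ₗ RA
  set K := eigenphaseSubspace U Θ
  have hcomm : ∀ v, K.starProjection (U v) = U (K.starProjection v) :=
    Submodule.starProjection_apply_of_mem_invtSubmodule
      (biSup_eigenspace_mem_invtSubmodule (Commute.refl U) _ _)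
      (orthogonal_mem_invtSubmodule_of_star
        (biSup_eigenspace_mem_invtSubmodule (commute_unitary_self_star hU) _ _))
  rw [← Submodule.starProjection_apply]
  calc ‖K.starProjection (PB w)‖
      = 2⁻¹ * ‖K.starProjection w - U (K.starProjection w)‖ := by
        rw [hPBw, map_smul, map_sub, hcomm, norm_smul]
        norm_num
    _ ≤ 2⁻¹ * (Θ * ‖w‖) := by
        grw [norm_sub_apply_le_of_mem_eigenphaseSubspace (Unitary.star_mul_self_of_mem hU) hΘ
          (K.starProjection_apply_mem w), K.norm_starProjection_apply_le w]
    _ = Θ / 2 * ‖w‖ := by ring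
end

section
/- With the setup of the quantum walk: G = (V,E) bipartite with parts A and B, edge weights w_e, initial distribution σ supported on A with support S disjoint from the marked set M ≠ ∅, and for each unmarked u the vector ψ_u = √(σ_u/(C₁R))|u⟩ + Σ_{uv∈E} √(w_{uv})|uv⟩ in the space spanned by {|u⟩ : u ∈ S} ∪ {|e⟩ : e ∈ E}. If p is a flow from σ to M with energy at most R, then the vector φ = √(C₁R) Σ_{u∈S} √(σ_u)|u⟩ − Σ_{e∈E} (p_e/√(w_e))|e⟩ (with each edge e oriented from A to B) is orthogonal to ψ_u for every unmarked vertex u. -/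
/-!
The square-root factors cancel, so the vertex term of `⟨φ, ψ_u⟩` is `σ_u` and every edge term is
`∓ p_{uv}`. Since `p` lives on edges and every edge runs from `A` to `B`, the edge terms at `u ∈ A`
add up to `-∑_v p_{uv}`, and those at `u ∈ B` to `∑_v p_{uv}`, where moreover `σ_u = 0`. Flow
conservation at the unmarked vertex `u` makes the total vanish.
-/

open Finset

lemma Real.sqrt_mul_sqrt_mul_sqrt_div {s c : ℝ} (hs : 0 ≤ s) (hc : 0 < c) :
    √c * √s * √(s / c) = s := by
  rw [mul_comm √c, mul_assoc, ← Real.sqrt_mul hc.le, mul_div_cancel₀ _ hc.ne',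
    Real.mul_self_sqrt hs]

lemma Real.div_sqrt_mul_sqrt_of_ne_zero_imp {x w : ℝ} (h : x ≠ 0 → 0 < w) :
    x / √w * √w = x := by
  rcases eq_or_ne x 0 with rfl | hx
  · simp
  · exact div_mul_cancel₀ x (Real.sqrt_pos.2 (h hx)).ne'

section Bipartite

variable {V : Type*} {X Y : Set V} {wt p : V → V → ℝ}

lemma edge_of_flow_ne_zero (hbip : ∀ a b, 0 < wt a b → a ∈ X ∧ b ∈ Y)
    (hsupp : ∀ u v, p u v ≠ 0 → 0 < wt u v ∨ 0 < wt v u) {u v : V} (h : p u v ≠ 0) :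
    (u ∈ X ∧ v ∈ Y ∧ 0 < wt u v) ∨ (v ∈ X ∧ u ∈ Y) := by
  rcases hsupp u v h with huv | hvu
  · exact Or.inl ⟨(hbip u v huv).1, (hbip u v huv).2, huv⟩
  · exact Or.inr (hbip v u hvu)

lemma sum_outgoing_terms_of_mem_left [Fintype V] [DecidablePred (· ∈ Y)]
    (hXY : Disjoint X Y) (hbip : ∀ a b, 0 < wt a b → a ∈ X ∧ b ∈ Y)
    (hsupp : ∀ u v, p u v ≠ 0 → 0 < wt u v ∨ 0 < wt v u) {u : V} (hu : u ∈ X) :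
    ∑ v, (if v ∈ Y then (-(p u v) / √(wt u v)) * √(wt u v) else 0) = -∑ v, p u v := by
  rw [← sum_neg_distrib]
  refine sum_congr rfl fun v _ => ?_
  split_ifs with hv
  · refine Real.div_sqrt_mul_sqrt_of_ne_zero_imp fun h => ?_
    rcases edge_of_flow_ne_zero hbip hsupp (neg_ne_zero.1 h) with ⟨-, -, hw⟩ | ⟨hvX, -⟩
    · exact hw
    · exact absurd hv (Set.disjoint_left.1 hXY hvX)
  · suffices p u v = 0 by simp [this]
    by_contra h
    rcases edge_of_flow_ne_zero hbip hsupp h with ⟨-, hvY, -⟩ | ⟨-, huY⟩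
    · exact hv hvY
    · exact Set.disjoint_left.1 hXY hu huY

lemma sum_incoming_terms_of_mem_left [Fintype V] [DecidablePred (· ∈ X)]
    (hXY : Disjoint X Y) (hbip : ∀ a b, 0 < wt a b → a ∈ X ∧ b ∈ Y)
    (hsupp : ∀ u v, p u v ≠ 0 → 0 < wt u v ∨ 0 < wt v u) {u : V} (hu : u ∈ X) :
    ∑ v, (if v ∈ X then (-(p v u) / √(wt v u)) * √(wt v u) else 0) = 0 := by
  refine sum_eq_zero fun v _ => ?_
  split_ifs with hv
  · suffices p v u = 0 by simp [this]
    by_contra h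
    rcases edge_of_flow_ne_zero hbip hsupp h with ⟨-, huY, -⟩ | ⟨-, hvY⟩
    · exact Set.disjoint_left.1 hXY hu huY
    · exact Set.disjoint_left.1 hXY hv hvY
  · rfl

end Bipartite

/-- The weights encode the edges: `uv ∈ E`, oriented from `A` to `B`, iff `0 < wt u v`. The
conclusion is `⟨φ, ψ_u⟩` written out in the orthonormal basis: the vertex term plus the terms of
the edges at `u` (edges `u → B` if `u ∈ A`, edges `A → u` if `u ∈ B`). -/
theorem flow_vector_orthogonal_to_walk_vectors_general
    {V : Type*} [Fintype V]
    (A B : Set V) [DecidablePred (· ∈ A)] [DecidablePred (· ∈ B)]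
    (hdisjAB : A ∩ B = ∅) (hcover : A ∪ B = Set.univ)
    (wt : V → V → ℝ)
    (hbip : ∀ a b, 0 < wt a b → a ∈ A ∧ b ∈ B)
    (σ : V → ℝ) (hσnonneg : ∀ u, 0 ≤ σ u)
    (hσA : ∀ u, σ u ≠ 0 → u ∈ A)
    (M : Set V)
    (C₁ R : ℝ) (hC₁ : 0 < C₁) (hR : 0 < R)
    (p : V → V → ℝ)
    (hanti : ∀ u v, p v u = -p u v)
    (hsupp : ∀ u v, p u v ≠ 0 → 0 < wt u v ∨ 0 < wt v u)
    (hcons : ∀ u ∉ M, ∑ v, p u v = σ u) :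
    ∀ u ∉ M,
      (Real.sqrt (C₁ * R) * Real.sqrt (σ u)) * Real.sqrt (σ u / (C₁ * R))
        + ∑ v, (if v ∈ B then (-(p u v) / Real.sqrt (wt u v)) * Real.sqrt (wt u v) else 0)
        + ∑ v, (if v ∈ A then (-(p v u) / Real.sqrt (wt v u)) * Real.sqrt (wt v u) else 0)
      = 0 := by
  intro u hu
  have hAB : Disjoint A B := Set.disjoint_iff_inter_eq_empty.2 hdisjAB
  rw [Real.sqrt_mul_sqrt_mul_sqrt_div (hσnonneg u) (mul_pos hC₁ hR)]
  rcases Set.eq_univ_iff_forall.1 hcover u with huA | huB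
  · rw [sum_outgoing_terms_of_mem_left hAB hbip hsupp huA,
      sum_incoming_terms_of_mem_left hAB hbip hsupp huA, hcons u hu]
    ring
  · -- The case `u ∈ B` is the case `u ∈ A` for the reversed graph and reversed flow.
    have hbip' : ∀ a b, 0 < wt b a → a ∈ B ∧ b ∈ A := fun a b h => (hbip b a h).symm
    have hsupp' : ∀ a b, p b a ≠ 0 → 0 < wt b a ∨ 0 < wt a b := fun a b => hsupp b a
    have hσu : σ u = 0 := not_imp_comm.1 (hσA u) (Set.disjoint_right.1 hAB huB)
    rw [sum_outgoing_terms_of_mem_left (p := fun a b => p b a) hAB.symm hbip' hsupp' huB,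
      sum_incoming_terms_of_mem_left (p := fun a b => p b a) hAB.symm hbip' hsupp' huB]
    have hinflow : ∑ v, p v u = -∑ v, p u v := by
      rw [← sum_neg_distrib]
      exact sum_congr rfl fun v _ => hanti u v
    rw [hinflow, hcons u hu, hσu]
    ring

/-- Quantum walk setup: `G` bipartite with parts `A`, `B` (weights oriented from
`A` to `B`: `wt a b > 0` only if `a ∈ A` and `b ∈ B`), initial distribution `σ`
with support `S ⊆ A` disjoint from the nonempty marked set `M`, and `p` a flow
from `σ` to `M` of energy at most `R`.  Then the vector
`φ = √(C₁R) Σ_{u∈S} √(σ_u)|u⟩ − Σ_{e∈E} (p_e/√(w_e))|e⟩` is orthogonal to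
`ψ_u = √(σ_u/(C₁R))|u⟩ + Σ_{uv∈E} √(w_{uv})|uv⟩` for every unmarked vertex `u`.
The conclusion writes out the inner product `⟨φ, ψ_u⟩` in the orthonormal basis
`{|u⟩ : u ∈ S} ∪ {|e⟩ : e ∈ E}`: the vertex term plus the terms of the edges
incident to `u` (edges `u→B` if `u ∈ A`, edges `A→u` if `u ∈ B`). -/
theorem flow_vector_orthogonal_to_walk_vectors
    {V : Type*} [Fintype V] [DecidableEq V]
    (A B : Set V) [DecidablePred (· ∈ A)] [DecidablePred (· ∈ B)]
    (hdisjAB : A ∩ B = ∅) (hcover : A ∪ B = Set.univ)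
    (wt : V → V → ℝ) (hnonneg : ∀ u v, 0 ≤ wt u v)
    (hbip : ∀ a b, 0 < wt a b → a ∈ A ∧ b ∈ B)
    (σ : V → ℝ) (hσnonneg : ∀ u, 0 ≤ σ u) (hσsum : ∑ u, σ u = 1)
    (hσA : ∀ u, σ u ≠ 0 → u ∈ A)
    (M : Set V) (hM : M.Nonempty) (hSM : ∀ u, σ u ≠ 0 → u ∉ M)
    (C₁ R : ℝ) (hC₁ : 0 < C₁) (hR : 0 < R)
    (p : V → V → ℝ)
    (hanti : ∀ u v, p v u = -p u v)
    (hsupp : ∀ u v, p u v ≠ 0 → 0 < wt u v ∨ 0 < wt v u)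
    (hcons : ∀ u ∉ M, ∑ v, p u v = σ u)
    (henergy : ∑ u, ∑ v, (p u v) ^ 2 / wt u v ≤ R) :
    ∀ u ∉ M,
      (Real.sqrt (C₁ * R) * Real.sqrt (σ u)) * Real.sqrt (σ u / (C₁ * R))
        + ∑ v, (if v ∈ B then (-(p u v) / Real.sqrt (wt u v)) * Real.sqrt (wt u v) else 0)
        + ∑ v, (if v ∈ A then (-(p v u) / Real.sqrt (wt v u)) * Real.sqrt (wt v u) else 0)
      = 0 :=
  flow_vector_orthogonal_to_walk_vectors_general A B hdisjAB hcover wt hbip σ hσnonneg hσA M C₁ R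
    hC₁ hR p hanti hsupp hcons
end

section
/- Let G be a finite bipartite graph with parts A and B, edge weights w_e > 0, and total weight W = Σ_e w_e. Let σ be a probability distribution supported on S ⊆ A, C₁ ≥ 1, R > 0, and for every vertex u define ψ_u as in the quantum walk (with no marked vertices: every u is unmarked). Let w = √(C₁R)[Σ_{u∈S} √(σ_u/(C₁R))|u⟩ + Σ_{e∈E} √(w_e)|e⟩]. Let Π_A (resp. Π_B) be the orthogonal projection onto the orthogonal complement of span{ψ_u : u ∈ A} (resp. span{ψ_u : u ∈ B}) within ⊕_{u∈A} H_u (resp. ⊕_{u∈B} H_u), extended appropriately. Then Π_A w = 0 and Π_B w = ς, where ς = Σ_{u∈S} √(σ_u)|u⟩. Moreover ‖w‖² = 1 + C₁ R W. -/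
noncomputable section

variable {V : Type*} [Fintype V] [DecidableEq V]

/-- A vector of the walk space, given by its coordinates in the orthonormal basis
indexed by vertices (`Sum.inl`) and oriented edges (`Sum.inr`). -/
def walkVec (f : V ⊕ (V × V) → ℝ) : EuclideanSpace ℝ (V ⊕ (V × V)) :=
  (WithLp.equiv 2 (V ⊕ (V × V) → ℝ)).symm f

/-- The local reflection vector `ψ_u = √(σ_u/(C₁R))|u⟩ + Σ_{uv∈E} √(w_{uv})|uv⟩`
(no marked vertices; the edge `e` contributes to `ψ_u` iff `u` is an endpoint of
`e`; coordinates of non-edges vanish since their weight is `0`). -/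
def walkPsi (wt : V → V → ℝ) (σ : V → ℝ) (C₁ R : ℝ) (u : V) :
    EuclideanSpace ℝ (V ⊕ (V × V)) :=
  walkVec (Sum.elim
    (fun v => if v = u then Real.sqrt (σ u / (C₁ * R)) else 0)
    (fun e => if e.1 = u ∨ e.2 = u then Real.sqrt (wt e.1 e.2) else 0))

/-- `w = √(C₁R)[Σ_{u∈S} √(σ_u/(C₁R))|u⟩ + Σ_{e∈E} √(w_e)|e⟩]`. -/
def walkW (wt : V → V → ℝ) (σ : V → ℝ) (C₁ R : ℝ) :
    EuclideanSpace ℝ (V ⊕ (V × V)) :=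
  walkVec (Sum.elim
    (fun v => Real.sqrt (C₁ * R) * Real.sqrt (σ v / (C₁ * R)))
    (fun e => Real.sqrt (C₁ * R) * Real.sqrt (wt e.1 e.2)))

/-- `ς = Σ_{u∈S} √(σ_u)|u⟩`. -/
def walkSigma (σ : V → ℝ) : EuclideanSpace ℝ (V ⊕ (V × V)) :=
  walkVec (Sum.elim (fun v => Real.sqrt (σ v)) (fun _ => 0))

end

/-! On the local space of each `u ∈ A`, `w` is `√(C₁R) ψ_u`: every edge has exactly one endpoint
in `A`, and `σ` vanishes off `A`. Hence `w ∈ span {ψ_u : u ∈ A}` and `Π_A w = 0`. Likewise the edge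
part `w - ς` is `√(C₁R) Σ_{u ∈ B} ψ_u`, while `ς` is orthogonal to every `ψ_u` with `u ∈ B`
because `σ u = 0` there; so `w = ς + (w - ς)` is the orthogonal decomposition giving `Π_B w = ς`. -/

lemma Real.sqrt_mul_sqrt_div_cancel {a : ℝ} (ha : 0 < a) (x : ℝ) : √a * √(x / a) = √x := by
  rw [← Real.sqrt_mul ha.le, mul_div_cancel₀ x ha.ne']

lemma Submodule.smul_sum_mem_span_image {R M ι : Type*} [Semiring R] [AddCommMonoid M]
    [Module R M] (c : R) (f : ι → M) (s : Finset ι) : c • ∑ i ∈ s, f i ∈ span R (f '' s) :=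
  smul_mem _ c (sum_mem fun _ hi => subset_span (Set.mem_image_of_mem f hi))

section WalkVectors

variable {V : Type*} {wt : V → V → ℝ} {σ : V → ℝ} {C₁ R : ℝ}

lemma walkW_inl (hCR : 0 < C₁ * R) (v : V) : walkW wt σ C₁ R (Sum.inl v) = √(σ v) :=
  Real.sqrt_mul_sqrt_div_cancel hCR (σ v)

lemma norm_walkW_sq [Fintype V] (hCR : 0 < C₁ * R) (hwt : ∀ u v, 0 ≤ wt u v)
    (hσ : ∀ u, 0 ≤ σ u) : ‖walkW wt σ C₁ R‖ ^ 2 = ∑ u, σ u + C₁ * R * ∑ u, ∑ v, wt u v := by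
  rw [EuclideanSpace.real_norm_sq_eq, Fintype.sum_sum_type, Fintype.sum_prod_type]
  simp only [walkW_inl hCR]
  simp [walkW, walkVec, mul_pow, Real.sq_sqrt, hσ, hwt, hCR.le, Finset.mul_sum]

section

variable [DecidableEq V]

lemma sum_walkPsi_inl (P : Finset V) (v : V) :
    (∑ u ∈ P, walkPsi wt σ C₁ R u) (Sum.inl v) = if v ∈ P then √(σ v / (C₁ * R)) else 0 := by
  simp [walkPsi, walkVec]

lemma sum_walkPsi_inr (P : Finset V) {e : V × V} (he : e.1 ≠ e.2) :
    (∑ u ∈ P, walkPsi wt σ C₁ R u) (Sum.inr e)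
      = (if e.1 ∈ P then √(wt e.1 e.2) else 0) + (if e.2 ∈ P then √(wt e.1 e.2) else 0) := by
  have hsplit : ∀ u, (if e.1 = u ∨ e.2 = u then √(wt e.1 e.2) else 0)
      = (if e.1 = u then √(wt e.1 e.2) else 0) + (if e.2 = u then √(wt e.1 e.2) else 0) := by
    intro u
    by_cases h₁ : e.1 = u <;> by_cases h₂ : e.2 = u <;> simp_all
  simp [walkPsi, walkVec, hsplit, Finset.sum_add_distrib]

lemma sum_walkPsi_inr_of_nonpos (P : Finset V) {e : V × V} (he : wt e.1 e.2 ≤ 0) :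
    (∑ u ∈ P, walkPsi wt σ C₁ R u) (Sum.inr e) = 0 := by
  simp [walkPsi, walkVec, Real.sqrt_eq_zero'.2 he]

lemma sum_walkPsi_inr_of_cut {P : Finset V} (hP : ∀ a b, 0 < wt a b → (a ∈ P ↔ b ∉ P))
    (e : V × V) : (∑ u ∈ P, walkPsi wt σ C₁ R u) (Sum.inr e) = √(wt e.1 e.2) := by
  -- `√` vanishes on nonpositive weights, so only edges of positive weight contribute.
  rcases le_or_gt (wt e.1 e.2) 0 with he | he
  · rw [sum_walkPsi_inr_of_nonpos P he, Real.sqrt_eq_zero'.2 he]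
  · have hcut := hP _ _ he
    have hne : e.1 ≠ e.2 := fun h => by simp [h] at hcut
    rw [sum_walkPsi_inr P hne]
    by_cases h₁ : e.1 ∈ P <;> simp_all

variable {P Q : Finset V}

lemma walkW_eq_smul_sum_walkPsi (hPQ : Disjoint P Q) (hbip : ∀ a b, 0 < wt a b → a ∈ P ∧ b ∈ Q)
    (hσ : ∀ u, σ u ≠ 0 → u ∈ P) :
    walkW wt σ C₁ R = √(C₁ * R) • ∑ u ∈ P, walkPsi wt σ C₁ R u := by
  have hcut : ∀ a b, 0 < wt a b → (a ∈ P ↔ b ∉ P) := fun a b hab =>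
    iff_of_true (hbip a b hab).1 (Finset.disjoint_right.1 hPQ (hbip a b hab).2)
  ext (v | e)
  · by_cases hv : v ∈ P
    · simp [walkW, walkVec, sum_walkPsi_inl, hv]
    · simp [walkW, walkVec, sum_walkPsi_inl, hv, not_imp_comm.1 (hσ v) hv]
  · simp [walkW, walkVec, sum_walkPsi_inr_of_cut hcut]

lemma walkW_sub_walkSigma_eq_smul_sum_walkPsi (hPQ : Disjoint P Q)
    (hbip : ∀ a b, 0 < wt a b → a ∈ P ∧ b ∈ Q) (hCR : 0 < C₁ * R) (hσ : ∀ u ∈ Q, σ u = 0) :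
    walkW wt σ C₁ R - walkSigma σ = √(C₁ * R) • ∑ u ∈ Q, walkPsi wt σ C₁ R u := by
  have hcut : ∀ a b, 0 < wt a b → (a ∈ Q ↔ b ∉ Q) := fun a b hab =>
    iff_of_false (Finset.disjoint_left.1 hPQ (hbip a b hab).1) (not_not.2 (hbip a b hab).2)
  ext (v | e)
  · by_cases hv : v ∈ Q
    · simp [walkW, walkSigma, walkVec, sum_walkPsi_inl, hv, hσ v hv]
    · simp [walkW_inl hCR, walkSigma, walkVec, sum_walkPsi_inl, hv]
  · simp [walkW, walkSigma, walkVec, sum_walkPsi_inr_of_cut hcut]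

lemma inner_walkPsi_walkSigma [Fintype V] (u : V) :
    inner ℝ (walkPsi wt σ C₁ R u) (walkSigma σ) = √(σ u) * √(σ u / (C₁ * R)) := by
  simp [walkPsi, walkSigma, walkVec, PiLp.inner_apply, Fintype.sum_sum_type]

lemma walkSigma_mem_orthogonal_span [Fintype V] {Q : Set V} (hσ : ∀ u ∈ Q, σ u = 0) :
    walkSigma σ ∈ (Submodule.span ℝ (walkPsi wt σ C₁ R '' Q))ᗮ := by
  refine (Submodule.isOrtho_span.2 ?_).ge (Submodule.mem_span_singleton_self _)
  rintro _ ⟨u, hu, rfl⟩ _ rfl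
  simp [inner_walkPsi_walkSigma, hσ u hu]

end

end WalkVectors

noncomputable section

variable {V : Type*} [Fintype V] [DecidableEq V]

theorem walk_witness_vector_properties_general
    (A B : Set V) (hdisjAB : A ∩ B = ∅)
    (wt : V → V → ℝ) (hnonneg : ∀ u v, 0 ≤ wt u v)
    (hbip : ∀ a b, 0 < wt a b → a ∈ A ∧ b ∈ B)
    (W : ℝ) (hW : W = ∑ u, ∑ v, wt u v)
    (σ : V → ℝ) (hσnonneg : ∀ u, 0 ≤ σ u) (hσsum : ∑ u, σ u = 1)
    (hσA : ∀ u, σ u ≠ 0 → u ∈ A)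
    (C₁ R : ℝ) (hC₁ : 1 ≤ C₁) (hR : 0 < R)
    (KA KB : Submodule ℝ (EuclideanSpace ℝ (V ⊕ (V × V))))
    (hKA : KA = Submodule.span ℝ ((walkPsi wt σ C₁ R) '' A))
    (hKB : KB = Submodule.span ℝ ((walkPsi wt σ C₁ R) '' B)) :
    ((Submodule.orthogonalProjection KAᗮ (walkW wt σ C₁ R) : EuclideanSpace ℝ (V ⊕ (V × V))) = 0)
    ∧ ((Submodule.orthogonalProjection KBᗮ (walkW wt σ C₁ R) : EuclideanSpace ℝ (V ⊕ (V × V)))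
        = walkSigma σ)
    ∧ ‖walkW wt σ C₁ R‖ ^ 2 = 1 + C₁ * R * W := by
  classical
  have hCR : 0 < C₁ * R := mul_pos (one_pos.trans_le hC₁) hR
  have hAB : Disjoint A.toFinset B.toFinset :=
    Set.disjoint_toFinset.2 (Set.disjoint_iff_inter_eq_empty.2 hdisjAB)
  have hbip' : ∀ a b, 0 < wt a b → a ∈ A.toFinset ∧ b ∈ B.toFinset := by simpa using hbip
  have hσB : ∀ u ∈ B, σ u = 0 := fun u hu =>
    by_contra fun h => Finset.disjoint_left.1 hAB (by simpa using hσA u h) (by simpa using hu)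
  refine ⟨?_, ?_, ?_⟩
  · have hw : walkW wt σ C₁ R ∈ KA := by
      rw [hKA, ← Set.coe_toFinset A, walkW_eq_smul_sum_walkPsi hAB hbip' (by simpa using hσA)]
      exact Submodule.smul_sum_mem_span_image _ _ _
    simp [Submodule.orthogonalProjectionOnto_orthogonal_apply_eq_zero hw]
  · have hw : walkW wt σ C₁ R - walkSigma σ ∈ KB := by
      rw [hKB, ← Set.coe_toFinset B,
        walkW_sub_walkSigma_eq_smul_sum_walkPsi hAB hbip' hCR (by simpa using hσB)]
      exact Submodule.smul_sum_mem_span_image _ _ _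
    exact Submodule.eq_starProjection_of_mem_orthogonal' (hKB ▸ walkSigma_mem_orthogonal_span hσB)
      (KB.le_orthogonal_orthogonal hw) (add_sub_cancel _ _).symm
  · rw [norm_walkW_sq hCR hnonneg hσnonneg, hσsum, hW]

/-- For a bipartite graph with parts `A`, `B` (weights oriented `A → B`),
probability distribution `σ` supported on `S ⊆ A`, `C₁ ≥ 1`, `R > 0` and
`W = Σ_e w_e`: with `Π_A`, `Π_B` the orthogonal projections onto the orthogonal
complements of `span{ψ_u : u ∈ A}` and `span{ψ_u : u ∈ B}`, the vector `w`
satisfies `Π_A w = 0`, `Π_B w = ς` and `‖w‖² = 1 + C₁RW`. -/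
theorem walk_witness_vector_properties
    (A B : Set V) (hdisjAB : A ∩ B = ∅) (hcover : A ∪ B = Set.univ)
    (wt : V → V → ℝ) (hnonneg : ∀ u v, 0 ≤ wt u v)
    (hbip : ∀ a b, 0 < wt a b → a ∈ A ∧ b ∈ B)
    (W : ℝ) (hW : W = ∑ u, ∑ v, wt u v)
    (σ : V → ℝ) (hσnonneg : ∀ u, 0 ≤ σ u) (hσsum : ∑ u, σ u = 1)
    (hσA : ∀ u, σ u ≠ 0 → u ∈ A)
    (C₁ R : ℝ) (hC₁ : 1 ≤ C₁) (hR : 0 < R)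
    (KA KB : Submodule ℝ (EuclideanSpace ℝ (V ⊕ (V × V))))
    (hKA : KA = Submodule.span ℝ ((walkPsi wt σ C₁ R) '' A))
    (hKB : KB = Submodule.span ℝ ((walkPsi wt σ C₁ R) '' B)) :
    ((Submodule.orthogonalProjection KAᗮ (walkW wt σ C₁ R) : EuclideanSpace ℝ (V ⊕ (V × V))) = 0)
    ∧ ((Submodule.orthogonalProjection KBᗮ (walkW wt σ C₁ R) : EuclideanSpace ℝ (V ⊕ (V × V)))
        = walkSigma σ)
    ∧ ‖walkW wt σ C₁ R‖ ^ 2 = 1 + C₁ * R * W :=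
  walk_witness_vector_properties_general A B hdisjAB wt hnonneg hbip W hW σ hσnonneg hσsum hσA C₁ R
    hC₁ hR KA KB hKA hKB

end
end

section
/- In the quantum walk for k-distinctness: let V_0' ⊆ V_0 be the subsets disjoint from the unique k-collision {a_1,...,a_k}, define the flow p assigning value 1/|V_0'| to each edge from S ∈ V_i (i < k, S ∩ {a_1,...,a_k} = {a_1,...,a_i}) to S ∪ {a_{i+1}}, and 0 elsewhere, and let φ = √(C₁) Σ_{S∈V_0'} (1/|V_0'|)|S⟩ − Σ_{e∈E} p_e |e⟩. Then ‖φ‖² = (k + C₁)/|V_0'| and ⟨φ, ς⟩ = √(C₁/|V_0|), where ς = |V_0|^{-1/2} Σ_{S∈V_0} |S⟩. Consequently ⟨φ/‖φ‖, ς⟩ = √(C₁|V_0'| / ((k+C₁)|V_0|)). -/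
open scoped RealInnerProductSpace

open Finset Real

section
variable {ι κ : Type*} [Fintype ι] [Fintype κ]

theorem EuclideanSpace.inner_toLp_sum_elim (f f' : ι → ℝ) (g g' : κ → ℝ) :
    ⟪WithLp.toLp 2 (Sum.elim f g), WithLp.toLp 2 (Sum.elim f' g')⟫ =
      ∑ i, f i * f' i + ∑ j, g j * g' j := by
  simp [PiLp.inner_apply, Fintype.sum_sum_type, mul_comm]

theorem EuclideanSpace.norm_sq_toLp_sum_elim (f : ι → ℝ) (g : κ → ℝ) :
    ‖WithLp.toLp 2 (Sum.elim f g)‖ ^ 2 = ∑ i, f i ^ 2 + ∑ j, g j ^ 2 := by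
  simpa only [real_inner_self_eq_norm_sq, pow_two] using inner_toLp_sum_elim f f g g

end

theorem Finset.sum_ite_mem_mul_ite_mem {α R : Type*} [Fintype α] [DecidableEq α]
    [CommSemiring R] {s t : Finset α} (hst : s ⊆ t) (a b : R) :
    ∑ x, (if x ∈ s then a else 0) * (if x ∈ t then b else 0) = #s * (a * b) := by
  have hmem : ∀ x, x ∈ s ∧ x ∈ t ↔ x ∈ s := fun x => and_iff_left_of_imp (@hst x)
  simp_rw [ite_zero_mul_ite_zero, hmem, Fintype.sum_ite_mem, sum_const, nsmul_eq_mul]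

theorem Finset.card_biUnion_of_card_eq {ι β : Type*} [DecidableEq β] {s : Finset ι}
    {t : ι → Finset β} {k : ℕ} (hdisj : (s : Set ι).PairwiseDisjoint t)
    (hcard : ∀ i ∈ s, #(t i) = k) : #(s.biUnion t) = #s * k := by
  rw [card_biUnion hdisj, sum_congr rfl hcard, sum_const, smul_eq_mul]

theorem kdist_flow_vector_overlap_general
    {Vert Edge : Type*} [Fintype Vert] [Fintype Edge] [DecidableEq Vert] [DecidableEq Edge]
    (k : ℕ) (C₁ : ℝ) (hC₁ : 0 < C₁)
    (V₀ V₀' : Finset Vert) (hsub : V₀' ⊆ V₀) (hne : V₀'.Nonempty)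
    (P : Vert → Finset Edge)
    (hPcard : ∀ S ∈ V₀', (P S).card = k)
    (hPdisj : ∀ S ∈ V₀', ∀ T ∈ V₀', S ≠ T → Disjoint (P S) (P T))
    (p : Edge → ℝ)
    (hp : ∀ e, p e = if ∃ S ∈ V₀', e ∈ P S then (1 : ℝ) / V₀'.card else 0)
    (φ ς : EuclideanSpace ℝ (Vert ⊕ Edge))
    (hφ : φ = (WithLp.equiv 2 (Vert ⊕ Edge → ℝ)).symm (Sum.elim
      (fun S => if S ∈ V₀' then Real.sqrt C₁ / V₀'.card else 0)
      (fun e => -(p e))))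
    (hς : ς = (WithLp.equiv 2 (Vert ⊕ Edge → ℝ)).symm (Sum.elim
      (fun S => if S ∈ V₀ then 1 / Real.sqrt V₀.card else 0)
      (fun _ => 0))) :
    ‖φ‖ ^ 2 = (k + C₁) / V₀'.card
    ∧ ⟪φ, ς⟫ = Real.sqrt (C₁ / V₀.card)
    ∧ ⟪‖φ‖⁻¹ • φ, ς⟫ = Real.sqrt (C₁ * V₀'.card / ((k + C₁) * V₀.card)) := by
  have hm : (0 : ℝ) < #V₀' := by exact_mod_cast hne.card_pos
  have hn : (0 : ℝ) < #V₀ := by exact_mod_cast (hne.mono hsub).card_pos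
  have hp_eq : p = fun e => if e ∈ V₀'.biUnion P then 1 / (#V₀' : ℝ) else 0 := by
    funext e
    rw [hp e]
    simp only [mem_biUnion]
  have hnorm_sq : ‖φ‖ ^ 2 = (k + C₁) / #V₀' := by
    rw [hφ, WithLp.equiv_symm_apply, EuclideanSpace.norm_sq_toLp_sum_elim, hp_eq]
    simp_rw [pow_two, neg_mul_neg, sum_ite_mem_mul_ite_mem subset_rfl,
      card_biUnion_of_card_eq hPdisj hPcard]
    push_cast
    field_simp
    rw [sq_sqrt hC₁.le]
    ring
  have hinner : ⟪φ, ς⟫ = √(C₁ / #V₀) := by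
    rw [hφ, hς, WithLp.equiv_symm_apply,
      EuclideanSpace.inner_toLp_sum_elim, sum_ite_mem_mul_ite_mem hsub, sqrt_div hC₁.le]
    simp only [mul_zero, sum_const_zero, add_zero]
    field_simp
  refine ⟨hnorm_sq, hinner, ?_⟩
  rw [real_inner_smul_left, hinner, ← sqrt_sq (norm_nonneg φ), hnorm_sq, ← sqrt_inv,
    ← sqrt_mul (by positivity)]
  congr 1
  field_simp

/-- Overlap analysis of the flow vector in the `k`-distinctness walk.  `V₀' ⊆ V₀`
are the subsets disjoint from the unique `k`-collision; each `S ∈ V₀'` carries a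
path of `k` edges (`P S`), pairwise edge-disjoint over distinct `S`; the flow
puts `1/|V₀'|` on each path edge.  With
`φ = √C₁ Σ_{S∈V₀'} (1/|V₀'|)|S⟩ − Σ_e p_e |e⟩` and
`ς = |V₀|^{-1/2} Σ_{S∈V₀} |S⟩` one has `‖φ‖² = (k+C₁)/|V₀'|`,
`⟨φ, ς⟩ = √(C₁/|V₀|)` and `⟨φ/‖φ‖, ς⟩ = √(C₁|V₀'|/((k+C₁)|V₀|))`. -/
theorem kdist_flow_vector_overlap
    {Vert Edge : Type*} [Fintype Vert] [Fintype Edge] [DecidableEq Vert] [DecidableEq Edge]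
    (k : ℕ) (hk : 1 ≤ k) (C₁ : ℝ) (hC₁ : 0 < C₁)
    (V₀ V₀' : Finset Vert) (hsub : V₀' ⊆ V₀) (hne : V₀'.Nonempty)
    (P : Vert → Finset Edge)
    (hPcard : ∀ S ∈ V₀', (P S).card = k)
    (hPdisj : ∀ S ∈ V₀', ∀ T ∈ V₀', S ≠ T → Disjoint (P S) (P T))
    (p : Edge → ℝ)
    (hp : ∀ e, p e = if ∃ S ∈ V₀', e ∈ P S then (1 : ℝ) / V₀'.card else 0)
    (φ ς : EuclideanSpace ℝ (Vert ⊕ Edge))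
    (hφ : φ = (WithLp.equiv 2 (Vert ⊕ Edge → ℝ)).symm (Sum.elim
      (fun S => if S ∈ V₀' then Real.sqrt C₁ / V₀'.card else 0)
      (fun e => -(p e))))
    (hς : ς = (WithLp.equiv 2 (Vert ⊕ Edge → ℝ)).symm (Sum.elim
      (fun S => if S ∈ V₀ then 1 / Real.sqrt V₀.card else 0)
      (fun _ => 0))) :
    ‖φ‖ ^ 2 = (k + C₁) / V₀'.card
    ∧ ⟪φ, ς⟫ = Real.sqrt (C₁ / V₀.card)
    ∧ ⟪‖φ‖⁻¹ • φ, ς⟫ = Real.sqrt (C₁ * V₀'.card / ((k + C₁) * V₀.card)) :=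
  kdist_flow_vector_overlap_general k C₁ hC₁ V₀ V₀' hsub hne P hPcard hPdisj p hp φ ς hφ hς
end
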